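/- arXiv:1903.00979 — 3 statements merged into one kernel-verified Lean document; each statement's English description precedes it below -/
import Mathlib

section
/- For 0 < m ≤ L, the infimum over λ > 1/2 of the quantity 1 - 2mLλ - (λ(L+m)-1)²/(1-2λ) equals (max{|1-m|,|1-L|})². -/
lemma g_eval (m L t : ℝ) (ht : 0 < t) :
    1 - 2*m*L*((t+1)/2) - (((t+1)/2)*(L+m) - 1)^2 / (1 - 2*((t+1)/2))
      = (1 - m*L + (L+m)^2/2 - (L+m)) + (L-m)^2/4*t + (L+m-2)^2/4/t := by
  have h : t ≠ 0 := ne_of_gt ht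
  rw [show (1:ℝ) - 2*((t+1)/2) = -t by ring]
  field_simp
  ring

lemma lb_aux (a c t : ℝ) (ht : 0 < t) :
    a*c/2 ≤ a^2/4*t + c^2/4/t := by
  have hq : c^2/4/t * t = c^2/4 := div_mul_cancel₀ _ (ne_of_gt ht)
  nlinarith [sq_nonneg (a*t - c), ht, sq_nonneg t]

lemma ub_aux (a c δ K t : ℝ) (ha : 0 ≤ a) (hc : 0 ≤ c) (hδ : 0 < δ) (hK : a + c ≤ 4*K)
    (htt : t = (c+δ)/(a+δ)) :
    a^2/4*t + c^2/4/t ≤ a*c/2 + δ*K := by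
  subst htt
  have h1 : 0 < a + δ := by linarith
  have h2 : 0 < c + δ := by linarith
  have key : a^2/4*((c+δ)/(a+δ)) + c^2/4/((c+δ)/(a+δ)) - a*c/2
      = δ^2*(a-c)^2/(4*(a+δ)*(c+δ)) := by
    field_simp
    ring
  have hK0 : 0 ≤ K := by linarith
  have s1 : δ*(a-c)^2 ≤ (a+c)*((a+δ)*(c+δ)) := by
    nlinarith [mul_nonneg (add_nonneg ha hc) (mul_nonneg ha hc),
      mul_nonneg hδ.le (mul_nonneg ha hc),
      mul_nonneg (mul_nonneg hδ.le hδ.le) (add_nonneg ha hc)]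
  have hbound : δ^2*(a-c)^2/(4*(a+δ)*(c+δ)) ≤ δ*K := by
    rw [div_le_iff₀ (by positivity)]
    nlinarith [mul_le_mul_of_nonneg_left s1 hδ.le, mul_pos h1 h2,
      mul_nonneg (mul_nonneg hδ.le (mul_pos h1 h2).le) (by linarith : (0:ℝ) ≤ 4*K - (a+c))]
  linarith

lemma max_eq_m (m L : ℝ) (hm : 0 < m) (hmL : m ≤ L) (h : m + L ≤ 2) :
    max |1 - m| |1 - L| = |1 - m| := by
  refine max_eq_left (abs_le.mpr ?_)
  have h1 : (1-L)^2 ≤ |1-m|^2 := by rw [sq_abs]; nlinarith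
  exact abs_le_of_sq_le_sq' h1 (abs_nonneg _)

lemma max_eq_L (m L : ℝ) (hm : 0 < m) (hmL : m ≤ L) (h : 2 ≤ m + L) :
    max |1 - m| |1 - L| = |1 - L| := by
  refine max_eq_right (abs_le.mpr ?_)
  have h1 : (1-m)^2 ≤ |1-L|^2 := by rw [sq_abs]; nlinarith
  exact abs_le_of_sq_le_sq' h1 (abs_nonneg _)

theorem stmt_0 (m L : ℝ) (hm : 0 < m) (hmL : m ≤ L) :
    IsGLB ((fun lam : ℝ => 1 - 2*m*L*lam - (lam*(L+m) - 1)^2 / (1 - 2*lam)) ''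
      Set.Ioi (1/2 : ℝ))
      ((max |1 - m| |1 - L|)^2) := by
  constructor
  · rintro x ⟨lam, hlam, rfl⟩
    rw [Set.mem_Ioi] at hlam
    obtain ⟨t, ht, rfl⟩ : ∃ t, 0 < t ∧ lam = (t+1)/2 :=
      ⟨2*lam - 1, by linarith, by ring⟩
    simp only
    rw [g_eval m L t ht]
    rcases le_total (m+L) 2 with h | h
    · rw [max_eq_m m L hm hmL h, sq_abs]
      have hlb := lb_aux (L-m) (2-m-L) t ht
      rw [show (2-m-L)^2 = (L+m-2)^2 by ring] at hlb
      nlinarith [hlb]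
    · rw [max_eq_L m L hm hmL h, sq_abs]
      have hlb := lb_aux (L-m) (m+L-2) t ht
      rw [show (m+L-2)^2 = (L+m-2)^2 by ring] at hlb
      nlinarith [hlb]
  · intro b hb
    by_contra hcon
    push_neg at hcon
    set M2 := (max |1 - m| |1 - L|)^2 with hM2
    have hδ : 0 < (b - M2)/2/(L+1) :=
      div_pos (by linarith) (by linarith)
    set δ := (b - M2)/2/(L+1) with hδdef
    have hδL : δ*(L+1) = (b - M2)/2 := by
      rw [hδdef, div_mul_cancel₀ _ (by linarith : (L+1:ℝ) ≠ 0)]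
    rcases le_total (m+L) 2 with h | h
    · set t := ((2-m-L)+δ)/((L-m)+δ) with htdef
      have ht : 0 < t := div_pos (by linarith) (by linarith)
      have hble := hb ⟨(t+1)/2, Set.mem_Ioi.mpr (by linarith), rfl⟩
      simp only at hble
      rw [g_eval m L t ht] at hble
      rw [show (L+m-2)^2 = (2-m-L)^2 by ring] at hble
      have hub := ub_aux (L-m) (2-m-L) δ (L+1) t (by linarith) (by linarith) hδ
        (by linarith) htdef
      have hMv : M2 = (1-m)^2 := by rw [hM2, max_eq_m m L hm hmL h, sq_abs]
      nlinarith [hub, hble]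
    · set t := ((m+L-2)+δ)/((L-m)+δ) with htdef
      have ht : 0 < t := div_pos (by linarith) (by linarith)
      have hble := hb ⟨(t+1)/2, Set.mem_Ioi.mpr (by linarith), rfl⟩
      simp only at hble
      rw [g_eval m L t ht] at hble
      rw [show (L+m-2)^2 = (m+L-2)^2 by ring] at hble
      have hub := ub_aux (L-m) (m+L-2) δ (L+1) t (by linarith) (by linarith) hδ
        (by linarith) htdef
      have hMv : M2 = (1-L)^2 := by rw [hM2, max_eq_L m L hm hmL h, sq_abs]
      nlinarith [hub, hble]
end

section
/- For a one-dimensional Gaussian mixture likelihood, the gradient update relation for mixing weights holds: if ℒ(θ) = Σₜ log(Σⱼ αⱼ pⱼ(xₜ)) with pⱼ fixed positive functions (componentwise densities given current μⱼ,Σⱼ), and h_j(t) = αⱼpⱼ(xₜ)/Σᵢαᵢpᵢ(xₜ), then the EM update α_j⁺ = (1/N)Σₜ h_j(t) satisfies α⁺ - α = P_α ∇_α ℒ(θ), where P_α = (1/N)(diag(α) - ααᵀ). -/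
/-!
The `j`-th entry of `(diagonal α - vecMulVec α α) *ᵥ g` is `α j * (g j - α ⬝ᵥ g)`. For the
gradient `g` of the log-likelihood, `α ⬝ᵥ g = ∑ₜ ∑ⱼ hⱼ(t) = N` because the responsibilities at each
sample sum to `1`, and `α j * g j = ∑ₜ hⱼ(t)`; dividing by `N` gives `α⁺ j - α j`.
-/

open Matrix

theorem Matrix.diagonal_sub_vecMulVec_mulVec_apply {n R : Type*} [CommRing R] [Fintype n]
    [DecidableEq n] (a g : n → R) (j : n) :
    ((diagonal a - vecMulVec a a) *ᵥ g) j = a j * g j - a j * (a ⬝ᵥ g) := by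
  rw [sub_mulVec, Pi.sub_apply, mulVec_diagonal, vecMulVec_mulVec]
  simp

section MixtureWeights

variable {𝕜 ι τ : Type*} [Field 𝕜] [Fintype ι] [Fintype τ]
  (p : ι → τ → 𝕜) (α : ι → 𝕜)

theorem dotProduct_mixture_gradient (hS : ∀ t, ∑ i, α i * p i t ≠ 0) :
    α ⬝ᵥ (fun j => ∑ t, p j t / ∑ i, α i * p i t) = Fintype.card τ := by
  simp only [dotProduct, Finset.mul_sum]
  rw [Finset.sum_comm]
  calc ∑ t, ∑ j, α j * (p j t / ∑ i, α i * p i t) = ∑ _t : τ, (1 : 𝕜) :=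
        Finset.sum_congr rfl fun t _ => by
          simp only [← mul_div_assoc, ← Finset.sum_div, div_self (hS t)]
    _ = Fintype.card τ := by simp

theorem em_weight_update_sub_apply [DecidableEq ι] (hN : (Fintype.card τ : 𝕜) ≠ 0)
    (hS : ∀ t, ∑ i, α i * p i t ≠ 0) (j : ι) :
    (1 / (Fintype.card τ : 𝕜)) * (∑ t, α j * p j t / ∑ i, α i * p i t) - α j
      = (((1 / (Fintype.card τ : 𝕜)) • (diagonal α - vecMulVec α α)) *ᵥ
          (fun j => ∑ t, p j t / ∑ i, α i * p i t)) j := by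
  have hresp :
      ∑ t, α j * p j t / ∑ i, α i * p i t = α j * ∑ t, p j t / ∑ i, α i * p i t := by
    simp only [Finset.mul_sum, mul_div_assoc]
  rw [smul_mulVec, Pi.smul_apply, diagonal_sub_vecMulVec_mulVec_apply,
    dotProduct_mixture_gradient p α hS, hresp, smul_eq_mul]
  field_simp

end MixtureWeights

theorem stmt_14_general (N K : ℕ) (hN : 1 ≤ N)
    (p : Fin K → Fin N → ℝ) (hp : ∀ j t, 0 < p j t)
    (α : Fin K → ℝ) (hα : ∀ j, 0 < α j) :
    (fun j => (1 / (N:ℝ)) * (∑ t, α j * p j t / ∑ i, α i * p i t) - α j)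
      = ((1 / (N:ℝ)) • (Matrix.diagonal α - Matrix.vecMulVec α α)) *ᵥ
          (fun j => ∑ t, p j t / ∑ i, α i * p i t) := by
  funext j
  -- the component `j` is what makes each mixture sum nonempty, hence positive
  have hS : ∀ t, ∑ i, α i * p i t ≠ 0 := fun t =>
    (Finset.sum_pos (fun i _ => mul_pos (hα i) (hp i t)) ⟨j, Finset.mem_univ j⟩).ne'
  have hN' : ((Fintype.card (Fin N) : ℕ) : ℝ) ≠ 0 := by
    rw [Fintype.card_fin]
    exact_mod_cast (Nat.one_le_iff_ne_zero.mp hN)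
  simpa only [Fintype.card_fin] using em_weight_update_sub_apply p α hN' hS j

theorem stmt_14 (N K : ℕ) (hN : 1 ≤ N)
    (p : Fin K → Fin N → ℝ) (hp : ∀ j t, 0 < p j t)
    (α : Fin K → ℝ) (hα : ∀ j, 0 < α j) (hsum : ∑ j, α j = 1) :
    (fun j => (1 / (N:ℝ)) * (∑ t, α j * p j t / ∑ i, α i * p i t) - α j)
      = ((1 / (N:ℝ)) • (Matrix.diagonal α - Matrix.vecMulVec α α)) *ᵥ
          (fun j => ∑ t, p j t / ∑ i, α i * p i t) :=
  stmt_14_general N K hN p hp α hα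
end

section
/- Under the sector/gradient conditions, the LMI feasibility implies contraction: if there exist R > 0 and λ ≥ 0 such that [[(1-μ²)R, -R],[-R, R]] + λ[[-2mL, L+m],[L+m, -2]] ⪯ 0, then for any function φ : ℝ → ℝ satisfying m(x-y) ≤ φ(x) - φ(y) ≤ L(x-y) for x ≥ y and φ(x*) = 0, the scalar iteration xₖ₊₁ = xₖ - φ(xₖ) satisfies |xₖ₊₁ - x*| ≤ μ|xₖ - x*|. -/
/-- A real matrix is negative semidefinite iff its negation is positive semidefinite. -/
def Matrix.NegSemidef' {n : Type*} [Fintype n] (M : Matrix n n ℝ) : Prop :=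
  (-M).PosSemidef

/-!
Write `e = x - x⋆` and `u = φ x`. Evaluating the LMI on the vector `(e, u)` gives
`R ((e - u)² - μ² e²) + 2λ (u - m e)(L e - u) ≤ 0`, and the slope bounds make the sector term
`(u - m e)(L e - u)` nonnegative, so `(e - u)² ≤ μ² e²`, i.e. `|x - φ x - x⋆| ≤ μ |x - x⋆|`.
-/

open Matrix

theorem Matrix.NegSemidef'.dotProduct_mulVec_nonpos {n : Type*} [Fintype n]
    {M : Matrix n n ℝ} (hM : M.NegSemidef') (v : n → ℝ) : v ⬝ᵥ M *ᵥ v ≤ 0 := by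
  have h := PosSemidef.dotProduct_mulVec_nonneg hM v
  rw [star_trivial, neg_mulVec, dotProduct_neg] at h
  linarith

theorem sector_nonneg_of_slope_bounds {m L a b : ℝ} (ha : a ≠ 0)
    (hm : m ≤ b / a) (hL : b / a ≤ L) : 0 ≤ (b - m * a) * (L * a - b) := by
  have hfactor : (b - m * a) * (L * a - b) = a ^ 2 * ((b / a - m) * (L - b / a)) := by
    field_simp
  rw [hfactor]
  exact mul_nonneg (sq_nonneg a) (mul_nonneg (sub_nonneg.mpr hm) (sub_nonneg.mpr hL))

def gradientLMIMatrix (m L mu R lam : ℝ) : Matrix (Fin 2) (Fin 2) ℝ :=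
  !![(1 - mu^2)*R, -R; -R, R] + lam • !![-2*m*L, L+m; L+m, -2]

theorem dotProduct_mulVec_gradientLMIMatrix (m L mu R lam e u : ℝ) :
    ![e, u] ⬝ᵥ gradientLMIMatrix m L mu R lam *ᵥ ![e, u]
      = R * ((e - u) ^ 2 - mu ^ 2 * e ^ 2) + 2 * lam * ((u - m * e) * (L * e - u)) := by
  simp only [gradientLMIMatrix, dotProduct, mulVec, smul_of, smul_cons, smul_eq_mul, smul_empty, Matrix.add_apply,
    of_apply, cons_val', cons_val_fin_one, Fin.sum_univ_two, cons_val_zero, cons_val_one]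
  ring

theorem sq_sub_le_of_negSemidef_gradientLMIMatrix {m L mu R lam e u : ℝ} (hR : 0 < R)
    (hlam : 0 ≤ lam) (hLMI : (gradientLMIMatrix m L mu R lam).NegSemidef')
    (hsector : 0 ≤ (u - m * e) * (L * e - u)) : (e - u) ^ 2 ≤ mu ^ 2 * e ^ 2 := by
  have hq := hLMI.dotProduct_mulVec_nonpos ![e, u]
  rw [dotProduct_mulVec_gradientLMIMatrix] at hq
  have hR_term : R * ((e - u) ^ 2 - mu ^ 2 * e ^ 2) ≤ 0 := by
    linarith [mul_nonneg hlam hsector]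
  linarith [(mul_nonpos_iff_pos_imp_nonpos.mp hR_term).1 hR]

theorem stmt_18_general (m L mu : ℝ) (hmu : mu ∈ Set.Ioo (0:ℝ) 1)
    (R lam : ℝ) (hR : 0 < R) (hlam : 0 ≤ lam)
    (hLMI : (!![(1 - mu^2)*R, -R; -R, R]
              + lam • !![-2*m*L, L+m; L+m, -2]).NegSemidef')
    (φ : ℝ → ℝ) (xstar : ℝ)
    (hslope : ∀ x y : ℝ, x ≠ y → m ≤ (φ x - φ y) / (x - y) ∧ (φ x - φ y) / (x - y) ≤ L)
    (hfix : φ xstar = 0) :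
    ∀ x : ℝ, |(x - φ x) - xstar| ≤ mu * |x - xstar| := by
  intro x
  rcases eq_or_ne x xstar with rfl | hx
  · simp [hfix]
  obtain ⟨hm, hL⟩ := hslope x xstar hx
  have hsector := sector_nonneg_of_slope_bounds (sub_ne_zero.mpr hx) hm hL
  rw [hfix, sub_zero] at hsector
  have hsq := sq_sub_le_of_negSemidef_gradientLMIMatrix hR hlam hLMI hsector
  rw [show x - φ x - xstar = x - xstar - φ x by ring]
  refine abs_le_of_sq_le_sq ?_ (mul_nonneg hmu.1.le (abs_nonneg _))
  rwa [mul_pow, sq_abs]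

theorem stmt_18 (m L mu : ℝ) (hm : 0 < m) (hmL : m ≤ L) (hmu : mu ∈ Set.Ioo (0:ℝ) 1)
    (R lam : ℝ) (hR : 0 < R) (hlam : 0 ≤ lam)
    (hLMI : (!![(1 - mu^2)*R, -R; -R, R]
              + lam • !![-2*m*L, L+m; L+m, -2]).NegSemidef')
    (φ : ℝ → ℝ) (xstar : ℝ)
    (hslope : ∀ x y : ℝ, x ≠ y → m ≤ (φ x - φ y) / (x - y) ∧ (φ x - φ y) / (x - y) ≤ L)
    (hfix : φ xstar = 0) :
    ∀ x : ℝ, |(x - φ x) - xstar| ≤ mu * |x - xstar| :=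
  stmt_18_general m L mu hmu R lam hR hlam hLMI φ xstar hslope hfix
end
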